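/- arXiv:2507.11509 — 2 statements merged into one kernel-verified Lean document; each statement's English description precedes it below -/
import Mathlib

section
/- Let Σ be a finite set, let H be a finite index set, and let c : Σ → H → ℝ be any function. For every probability distribution μ on Σ there exists a probability distribution μ' on Σ whose support has cardinality at most |H| + 1 such that for every h ∈ H, ∑_{σ ∈ Σ} μ(σ)·c(σ,h) = ∑_{σ ∈ Σ} μ'(σ)·c(σ,h). -/
/-! Carathéodory's theorem: the vector of statistics `∑ μ s • c s` lies in the convex hull of the
finitely many points `c s`, so it is already a convex combination of affinely independent points
`c s`, of which there are at most `dim + 1`. Reweighting those points gives the new distribution. -/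

open Finset Module

section Pushforward

variable {ι S R : Type*} [Fintype ι] [DecidableEq S]

def pushforwardWeights [AddCommMonoid R] (g : ι → S) (w : ι → R) (s : S) : R :=
  ∑ i with g i = s, w i

theorem pushforwardWeights_nonneg [AddCommMonoid R] [PartialOrder R] [IsOrderedAddMonoid R]
    (g : ι → S) {w : ι → R} (hw : ∀ i, 0 ≤ w i) (s : S) : 0 ≤ pushforwardWeights g w s :=
  sum_nonneg fun i _ => hw i

variable [Fintype S]

theorem sum_pushforwardWeights_smul {E : Type*} [Semiring R] [AddCommMonoid E] [Module R E]
    (g : ι → S) (w : ι → R) (f : S → E) :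
    ∑ s, pushforwardWeights g w s • f s = ∑ i, w i • f (g i) := by
  rw [← sum_fiberwise univ g fun i => w i • f (g i)]
  refine sum_congr rfl fun s _ => ?_
  rw [pushforwardWeights, sum_smul]
  exact sum_congr rfl fun i hi => by rw [(mem_filter.1 hi).2]

theorem sum_pushforwardWeights [Semiring R] (g : ι → S) (w : ι → R) :
    ∑ s, pushforwardWeights g w s = ∑ i, w i := by
  simpa using sum_pushforwardWeights_smul g w (fun _ => (1 : R))

theorem card_pushforwardWeights_ne_zero_le [AddCommMonoid R] (g : ι → S) (w : ι → R)
    [DecidablePred fun s => pushforwardWeights g w s ≠ 0] :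
    #{s | pushforwardWeights g w s ≠ 0} ≤ Fintype.card ι := by
  have hsupp : univ.filter (fun s => pushforwardWeights g w s ≠ 0) ⊆ univ.image g := by
    intro s hs
    obtain ⟨i, hi, -⟩ := exists_ne_zero_of_sum_ne_zero (mem_filter.1 hs).2
    exact mem_image.2 ⟨i, mem_univ i, (mem_filter.1 hi).2⟩
  exact (card_le_card hsupp).trans card_image_le

end Pushforward

open Classical in
theorem exists_weights_card_ne_zero_le_finrank_succ {𝕜 S E : Type*} [Field 𝕜] [LinearOrder 𝕜]
    [IsStrictOrderedRing 𝕜] [AddCommGroup E] [Module 𝕜 E] [FiniteDimensional 𝕜 E] [Fintype S]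
    (c : S → E) (μ : S → 𝕜) (hμ0 : ∀ s, 0 ≤ μ s) (hμ1 : ∑ s, μ s = 1) :
    ∃ μ' : S → 𝕜, (∀ s, 0 ≤ μ' s) ∧ ∑ s, μ' s = 1 ∧
      #{s | μ' s ≠ 0} ≤ finrank 𝕜 E + 1 ∧ ∑ s, μ' s • c s = ∑ s, μ s • c s := by
  obtain ⟨ι, _, z, w, hz, hind, hw0, hw1, hwz⟩ := eq_pos_convex_span_of_mem_convexHull
    (mem_convexHull_of_exists_fintype μ c hμ0 hμ1 Set.mem_range_self rfl)
  choose g hg using fun i => hz (Set.mem_range_self i)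
  refine ⟨pushforwardWeights g w, pushforwardWeights_nonneg g fun i => (hw0 i).le,
    (sum_pushforwardWeights g w).trans hw1, ?_, ?_⟩
  · calc #{s | pushforwardWeights g w s ≠ 0} ≤ Fintype.card ι :=
          card_pushforwardWeights_ne_zero_le g w
      _ ≤ finrank 𝕜 (vectorSpan 𝕜 (Set.range z)) + 1 := hind.card_le_finrank_succ
      _ ≤ finrank 𝕜 E + 1 := by grw [Submodule.finrank_le]
  · simp only [sum_pushforwardWeights_smul, hg, hwz]

open Classical in
/-- Small-support lemma (Carathéodory): any distribution can be replaced by one with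
support of size at most |H| + 1 preserving all the linear statistics `c · h`. -/
theorem small_support_preserving_statistics
    {S H : Type} [Fintype S] [Fintype H] (c : S → H → ℝ)
    (μ : S → ℝ) (hμ0 : ∀ s, 0 ≤ μ s) (hμ1 : ∑ s, μ s = 1) :
    ∃ μ' : S → ℝ, (∀ s, 0 ≤ μ' s) ∧ (∑ s, μ' s = 1) ∧
      (Finset.univ.filter (fun s => μ' s ≠ 0)).card ≤ Fintype.card H + 1 ∧
      ∀ h : H, ∑ s, μ s * c s h = ∑ s, μ' s * c s h := by
  obtain ⟨μ', hμ'0, hμ'1, hcard, hstat⟩ :=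
    exists_weights_card_ne_zero_le_finrank_succ c μ hμ0 hμ1
  refine ⟨μ', hμ'0, hμ'1, by rwa [finrank_fintype_fun_eq_card] at hcard, fun h => ?_⟩
  simpa using congrFun hstat.symm h
end

section
/- Fix n ≥ 1, variables ordered x₁, y₁, …, x_n, y_n as positions 1,…,2n, and a Boolean predicate φ on assignments {1,…,2n} → {⊤,⊥}. Define the truth of the quantified formula ∃x₁∀y₁…∃x_n∀y_n φ recursively in the usual way. Then this quantified formula is true if and only if there exists a set P of assignments, all satisfying φ, that is minimal proof-shaped: each existential position has a unique continuation in P given any realized prefix, and each universal position has both continuations in P given any realized prefix. -/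
/-- Truth of the quantified formula `∃x₁ ∀y₁ … ∃x_n ∀y_n, φ`, consuming the quantifier
prefix from the front (positions are 0-based: `x_i` at index `2i-2`, `y_i` at `2i-1`). -/
def qbfTrue : (n : ℕ) → ((Fin (2 * n) → Bool) → Prop) → Prop
  | 0, φ => φ (fun i => Fin.elim0 i)
  | n + 1, φ => ∃ bx : Bool, ∀ byv : Bool,
      qbfTrue n (fun θ => φ (fun i =>
        if _h0 : i.val = 0 then bx
        else if _h1 : i.val = 1 then byv
        else θ ⟨i.val - 2, by have := i.isLt; omega⟩))

/-!
Induction on `n`, peeling off the first block `∃x₁ ∀y₁`. If `x₁ := a` works, proofs `Q b` of the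
two residual formulas `φ(a, b, ·)` glue, after prefixing `(a, b)`, into a proof of the whole
formula. Conversely, uniqueness at position `0` forces every member of a proof to start with the
same `a`, branching at position `1` makes both values of `y₁` occur, and splitting by that value
and dropping the first two coordinates yields proofs of both residual formulas.
-/

variable {m : ℕ}

lemma Fin.eq_zero_or_eq_one_or_eq_succ_succ (k : Fin (m + 2)) :
    k = 0 ∨ k = 1 ∨ ∃ j : Fin m, k = j.succ.succ := by
  rcases Fin.eq_zero_or_eq_succ k with rfl | ⟨k, rfl⟩
  · exact .inl rfl
  rcases Fin.eq_zero_or_eq_succ k with rfl | ⟨j, rfl⟩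
  · exact .inr (.inl rfl)
  · exact .inr (.inr ⟨j, rfl⟩)

lemma Fin.forall_lt_succ_succ_iff {p : Fin (m + 2) → Prop} {k : Fin m} :
    (∀ j < k.succ.succ, p j) ↔ p 0 ∧ p 1 ∧ ∀ j < k, p j.succ.succ := by
  refine ⟨fun h => ⟨h 0 (Fin.succ_pos _), h 1 ?_, fun j hj => h _ (by simpa using hj)⟩, ?_⟩
  · exact Fin.succ_lt_succ_iff.2 (Fin.succ_pos k)
  rintro ⟨h0, h1, h⟩ j hj
  obtain rfl | rfl | ⟨j, rfl⟩ := j.eq_zero_or_eq_one_or_eq_succ_succ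
  exacts [h0, h1, h j (by simpa using hj)]

lemma Fin.val_succ_succ_mod_two (k : Fin m) : k.succ.succ.val % 2 = k.val % 2 := by
  simp only [Fin.val_succ]
  omega

namespace QBF

open Finset

-- Even positions hold the existential variables, odd ones the universal variables.
def ExistentialUnique (P : Finset (Fin m → Bool)) : Prop :=
  ∀ θ ∈ P, ∀ k : Fin m, k.val % 2 = 0 →
    ∀ θ' ∈ P, (∀ j : Fin m, j < k → θ' j = θ j) → θ' k = θ k

def UniversalBranching (P : Finset (Fin m → Bool)) : Prop :=
  ∀ θ ∈ P, ∀ k : Fin m, k.val % 2 = 1 →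
    ∃ θ' ∈ P, (∀ j : Fin m, j < k → θ' j = θ j) ∧ θ' k ≠ θ k

def IsMinimalProof (φ : (Fin m → Bool) → Prop) (P : Finset (Fin m → Bool)) : Prop :=
  P.Nonempty ∧ (∀ θ ∈ P, φ θ) ∧ ExistentialUnique P ∧ UniversalBranching P

def cons₂ (a b : Bool) (τ : Fin m → Bool) : Fin (m + 2) → Bool :=
  Fin.cons a (Fin.cons b τ)

def tail₂ (θ : Fin (m + 2) → Bool) : Fin m → Bool :=
  Fin.tail (Fin.tail θ)

@[simp] lemma cons₂_zero (a b : Bool) (τ : Fin m → Bool) : cons₂ a b τ 0 = a := rfl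

@[simp] lemma cons₂_one (a b : Bool) (τ : Fin m → Bool) : cons₂ a b τ 1 = b := rfl

@[simp] lemma cons₂_succ_succ (a b : Bool) (τ : Fin m → Bool) (k : Fin m) :
    cons₂ a b τ k.succ.succ = τ k := rfl

lemma cons₂_tail₂ (θ : Fin (m + 2) → Bool) : cons₂ (θ 0) (θ 1) (tail₂ θ) = θ := by
  change Fin.cons (θ 0) (Fin.cons (Fin.tail θ 0) (Fin.tail (Fin.tail θ))) = θ
  rw [Fin.cons_self_tail, Fin.cons_self_tail]

lemma ExistentialUnique.apply_zero_eq {P : Finset (Fin (m + 1) → Bool)} (hP : ExistentialUnique P)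
    {θ θ' : Fin (m + 1) → Bool} (hθ : θ ∈ P) (hθ' : θ' ∈ P) : θ' 0 = θ 0 :=
  hP θ hθ 0 rfl θ' hθ' fun j hj => absurd hj (Fin.not_lt_zero j)

lemma exists_isMinimalProof_fin_zero_iff (φ : (Fin 0 → Bool) → Prop) :
    (∃ P, IsMinimalProof φ P) ↔ φ Fin.elim0 := by
  refine ⟨fun ⟨P, ⟨θ, hθ⟩, hφ, _⟩ => Subsingleton.elim θ Fin.elim0 ▸ hφ θ hθ, fun h => ?_⟩
  exact ⟨{Fin.elim0}, singleton_nonempty _, by simpa, fun _ _ k => k.elim0, fun _ _ k => k.elim0⟩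

section JoinBranches

variable {a : Bool} {Q : Bool → Finset (Fin m → Bool)}

def joinBranches (a : Bool) (Q : Bool → Finset (Fin m → Bool)) : Finset (Fin (m + 2) → Bool) :=
  univ.biUnion fun b => (Q b).image (cons₂ a b)

lemma mem_joinBranches {θ : Fin (m + 2) → Bool} :
    θ ∈ joinBranches a Q ↔ ∃ b, ∃ τ ∈ Q b, cons₂ a b τ = θ := by
  simp only [joinBranches, mem_biUnion, mem_univ, true_and, mem_image]

lemma cons₂_mem_joinBranches {b : Bool} {τ : Fin m → Bool} (hτ : τ ∈ Q b) :
    cons₂ a b τ ∈ joinBranches a Q :=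
  mem_joinBranches.2 ⟨b, τ, hτ, rfl⟩

lemma existentialUnique_joinBranches (hQ : ∀ b, ExistentialUnique (Q b)) :
    ExistentialUnique (joinBranches a Q) := by
  rintro _ hθ k hk _ hθ' hagree
  obtain ⟨b, τ, hτ, rfl⟩ := mem_joinBranches.1 hθ
  obtain ⟨b', τ', hτ', rfl⟩ := mem_joinBranches.1 hθ'
  obtain rfl | rfl | ⟨k, rfl⟩ := k.eq_zero_or_eq_one_or_eq_succ_succ
  · rfl
  · simp at hk
  · obtain ⟨-, hb, hagree⟩ := Fin.forall_lt_succ_succ_iff.1 hagree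
    rw [Fin.val_succ_succ_mod_two] at hk
    rw [cons₂_one, cons₂_one] at hb
    rw [hb] at hτ'
    exact hQ b τ hτ k hk τ' hτ' hagree

lemma universalBranching_joinBranches (hne : ∀ b, (Q b).Nonempty)
    (hQ : ∀ b, UniversalBranching (Q b)) : UniversalBranching (joinBranches a Q) := by
  rintro _ hθ k hk
  obtain ⟨b, τ, hτ, rfl⟩ := mem_joinBranches.1 hθ
  obtain rfl | rfl | ⟨k, rfl⟩ := k.eq_zero_or_eq_one_or_eq_succ_succ
  · simp at hk
  · obtain ⟨σ, hσ⟩ := hne (!b)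
    refine ⟨cons₂ a (!b) σ, cons₂_mem_joinBranches hσ, fun j hj => ?_, by simp⟩
    have : j = 0 := by
      rw [Fin.lt_def, Fin.val_one] at hj
      exact Fin.ext (by rw [Fin.val_zero]; omega)
    subst this; rfl
  · rw [Fin.val_succ_succ_mod_two] at hk
    obtain ⟨τ', hτ', hagree, hne⟩ := hQ b τ hτ k hk
    exact ⟨cons₂ a b τ', cons₂_mem_joinBranches hτ', Fin.forall_lt_succ_succ_iff.2 ⟨rfl, rfl, hagree⟩, hne⟩

end JoinBranches

lemma isMinimalProof_joinBranches {φ : (Fin (m + 2) → Bool) → Prop}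
    (hQ : ∀ b, IsMinimalProof (fun τ => φ (cons₂ a b τ)) (Q b)) :
    IsMinimalProof φ (joinBranches a Q) := by
  refine ⟨?_, ?_, existentialUnique_joinBranches fun b => (hQ b).2.2.1,
    universalBranching_joinBranches (fun b => (hQ b).1) fun b => (hQ b).2.2.2⟩
  · obtain ⟨τ, hτ⟩ := (hQ true).1
    exact ⟨_, cons₂_mem_joinBranches hτ⟩
  · intro θ hθ
    obtain ⟨b, τ, hτ, rfl⟩ := mem_joinBranches.1 hθ
    exact (hQ b).2.1 τ hτ

section Branch

variable {P : Finset (Fin (m + 2) → Bool)} {b : Bool}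

def branch (P : Finset (Fin (m + 2) → Bool)) (b : Bool) : Finset (Fin m → Bool) :=
  (P.filter fun θ => θ 1 = b).image tail₂

lemma mem_branch {τ : Fin m → Bool} : τ ∈ branch P b ↔ ∃ θ ∈ P, θ 1 = b ∧ tail₂ θ = τ := by
  simp only [branch, mem_image, mem_filter, and_assoc]

lemma existentialUnique_branch (hP : ExistentialUnique P) : ExistentialUnique (branch P b) := by
  rintro _ hτ k hk _ hτ' hagree
  obtain ⟨θ, hθ, hθb, rfl⟩ := mem_branch.1 hτ
  obtain ⟨θ', hθ', hθ'b, rfl⟩ := mem_branch.1 hτ'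
  refine hP θ hθ k.succ.succ (by rwa [Fin.val_succ_succ_mod_two]) θ' hθ' ?_
  exact Fin.forall_lt_succ_succ_iff.2 ⟨hP.apply_zero_eq hθ hθ', hθ'b.trans hθb.symm, hagree⟩

lemma universalBranching_branch (hP : UniversalBranching P) : UniversalBranching (branch P b) := by
  rintro _ hτ k hk
  obtain ⟨θ, hθ, rfl, rfl⟩ := mem_branch.1 hτ
  obtain ⟨θ', hθ', hagree, hne⟩ := hP θ hθ k.succ.succ (by rwa [Fin.val_succ_succ_mod_two])
  obtain ⟨-, h1, hagree⟩ := Fin.forall_lt_succ_succ_iff.1 hagree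
  exact ⟨tail₂ θ', mem_branch.2 ⟨θ', hθ', h1, rfl⟩, hagree, hne⟩

lemma branch_nonempty (hP : UniversalBranching P) (hne : P.Nonempty) :
    (branch P b).Nonempty := by
  obtain ⟨θ, hθ⟩ := hne
  by_cases hb : θ 1 = b
  · exact ⟨_, mem_branch.2 ⟨θ, hθ, hb, rfl⟩⟩
  · obtain ⟨θ', hθ', -, hne'⟩ := hP θ hθ 1 (by simp)
    exact ⟨_, mem_branch.2 ⟨θ', hθ', (Bool.eq_not.2 hne').trans (Bool.not_eq.2 hb), rfl⟩⟩

lemma isMinimalProof_branch {φ : (Fin (m + 2) → Bool) → Prop} {a : Bool}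
    (hP : IsMinimalProof φ P) (ha : ∀ θ ∈ P, θ 0 = a) :
    IsMinimalProof (fun τ => φ (cons₂ a b τ)) (branch P b) := by
  refine ⟨branch_nonempty hP.2.2.2 hP.1, ?_, existentialUnique_branch hP.2.2.1,
    universalBranching_branch hP.2.2.2⟩
  intro τ hτ
  obtain ⟨θ, hθ, rfl, rfl⟩ := mem_branch.1 hτ
  rw [← ha θ hθ, cons₂_tail₂]
  exact hP.2.1 θ hθ

end Branch

lemma qbfTrue_succ_iff (n : ℕ) (φ : (Fin (2 * (n + 1)) → Bool) → Prop) :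
    qbfTrue (n + 1) φ ↔ ∃ a, ∀ b, qbfTrue n fun τ => φ (cons₂ a b τ) := by
  rw [qbfTrue]
  congr! 7 with a b τ i
  obtain rfl | rfl | ⟨j, rfl⟩ := i.eq_zero_or_eq_one_or_eq_succ_succ
  all_goals simp [Fin.val_succ, Nat.one_mod_eq_one]

theorem qbfTrue_iff_exists_isMinimalProof :
    ∀ {n : ℕ} (φ : (Fin (2 * n) → Bool) → Prop), qbfTrue n φ ↔ ∃ P, IsMinimalProof φ P
  | 0, φ => (exists_isMinimalProof_fin_zero_iff φ).symm
  | n + 1, φ => by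
    rw [qbfTrue_succ_iff]
    constructor
    · rintro ⟨a, h⟩
      choose Q hQ using fun b => (qbfTrue_iff_exists_isMinimalProof _).1 (h b)
      exact ⟨_, isMinimalProof_joinBranches hQ⟩
    · rintro ⟨P, hP⟩
      obtain ⟨θ, hθ⟩ := hP.1
      exact ⟨θ 0, fun b => (qbfTrue_iff_exists_isMinimalProof _).2
        ⟨_, isMinimalProof_branch hP fun θ' hθ' => hP.2.2.1.apply_zero_eq hθ hθ'⟩⟩

end QBF

theorem qbf_true_iff_minimal_explicit_proof_general
    {n : ℕ} (φ : (Fin (2 * n) → Bool) → Prop) :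
    qbfTrue n φ ↔
      ∃ P : Finset (Fin (2 * n) → Bool),
        P.Nonempty ∧ (∀ θ ∈ P, φ θ) ∧
        (∀ θ ∈ P, ∀ k : Fin (2 * n), k.val % 2 = 0 →
          ∀ θ' ∈ P, (∀ j : Fin (2 * n), j < k → θ' j = θ j) → θ' k = θ k) ∧
        (∀ θ ∈ P, ∀ k : Fin (2 * n), k.val % 2 = 1 →
          ∃ θ' ∈ P, (∀ j : Fin (2 * n), j < k → θ' j = θ j) ∧ θ' k ≠ θ k) :=
  QBF.qbfTrue_iff_exists_isMinimalProof φ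

/-- A QBF `∃x₁∀y₁…∃x_n∀y_n φ` is true iff it admits a minimal explicit proof: a set of
assignments satisfying `φ` in which every existential position has a unique continuation
given any realized prefix and every universal position has both continuations. -/
theorem qbf_true_iff_minimal_explicit_proof
    {n : ℕ} (hn : 1 ≤ n) (φ : (Fin (2 * n) → Bool) → Prop) :
    qbfTrue n φ ↔
      ∃ P : Finset (Fin (2 * n) → Bool),
        P.Nonempty ∧ (∀ θ ∈ P, φ θ) ∧
        (∀ θ ∈ P, ∀ k : Fin (2 * n), k.val % 2 = 0 →
          ∀ θ' ∈ P, (∀ j : Fin (2 * n), j < k → θ' j = θ j) → θ' k = θ k) ∧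
        (∀ θ ∈ P, ∀ k : Fin (2 * n), k.val % 2 = 1 →
          ∃ θ' ∈ P, (∀ j : Fin (2 * n), j < k → θ' j = θ j) ∧ θ' k ≠ θ k) :=
  qbf_true_iff_minimal_explicit_proof_general φ
end
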